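/- Let M be a pointed metric space. Then M has the 2-Lip-LTP if and only if for every finite cyclically monotonic subset A of M̃ and every γ ∈ (0,1), there exist u,v ∈ M with u ≠ v such that A ∪ {(u,v)} and A ∪ {(v,u)} are both γ-cyclically monotonic. -/
import Mathlib


/-- The set `M̃ = {(x,y) : x ≠ y}` as a subtype. -/
def Mt (M : Type*) : Type _ := {p : M × M // p.1 ≠ p.2}

variable {M : Type*} [MetricSpace M]

/-- The de Leeuw quotient `f(m_{x,y}) = (f x - f y)/d(x,y)`. -/
noncomputable def mQ (f : M → ℝ) (p : Mt M) : ℝ :=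
  (f p.1.1 - f p.1.2) / dist p.1.1 p.1.2

/-- `A ⊆ M̃` is `γ`-cyclically monotonic. -/
def GammaCM (γ : ℝ) (A : Set (Mt M)) : Prop :=
  ∀ (n : ℕ) (p : Fin (n + 1) → Mt M), (∀ i, p i ∈ A) →
    0 ≤ ∑ i : Fin (n + 1),
      min (dist (p i).1.1 (p (i + 1)).1.2 - γ * dist (p i).1.1 (p i).1.2)
          (dist (p i).1.2 (p (i + 1)).1.2)

/-- `π(A)`. -/
def piA (A : Set (Mt M)) : Set M := {z | ∃ p ∈ A, p.1.1 = z ∨ p.1.2 = z}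

/-- The pair `(u,v)` as an element of `M̃`. -/
def pr {M : Type*} (u v : M) (h : u ≠ v) : Mt M := ⟨(u, v), h⟩

/- ===== auxiliary ===== -/

noncomputable def cst (γ : ℝ) (p : Mt M) (z : M) : ℝ :=
  min (dist p.1.1 z - γ * dist p.1.1 p.1.2) (dist p.1.2 z)

noncomputable def chainVal (γ : ℝ) (n : ℕ) (q : ℕ → Mt M) (z : M) : ℝ :=
  (∑ i ∈ Finset.range n, cst γ (q i) ((q (i+1)).1.2)) + cst γ (q n) z

lemma cst_le (γ : ℝ) (p : Mt M) (z w : M) : cst γ p z ≤ cst γ p w + dist z w := by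
  unfold cst
  have h1 : dist p.1.1 z ≤ dist p.1.1 w + dist z w := by
    rw [dist_comm z w]; exact dist_triangle _ _ _
  have h2 : dist p.1.2 z ≤ dist p.1.2 w + dist z w := by
    rw [dist_comm z w]; exact dist_triangle _ _ _
  refine le_trans (le_min ?_ ?_) (le_of_eq (min_add_add_right _ _ _))
  · exact (min_le_left _ _).trans (by linarith)
  · exact (min_le_right _ _).trans (by linarith)

lemma chainVal_le (γ : ℝ) (n : ℕ) (q : ℕ → Mt M) (z w : M) :
    chainVal γ n q z ≤ chainVal γ n q w + dist z w := by
  unfold chainVal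
  have := cst_le γ (q n) z w
  linarith

lemma chainVal_congr {γ : ℝ} {n : ℕ} {q q' : ℕ → Mt M} (z : M)
    (h : ∀ i ≤ n, q i = q' i) : chainVal γ n q z = chainVal γ n q' z := by
  unfold chainVal
  congr 1
  · refine Finset.sum_congr rfl fun i hi => ?_
    have hi' : i < n := Finset.mem_range.mp hi
    rw [h i hi'.le, h (i+1) hi']
  · rw [h n le_rfl]

lemma chainVal_snoc (γ : ℝ) (n : ℕ) (q : ℕ → Mt M) (r : Mt M) (z : M) :
    chainVal γ (n+1) (fun i => if i ≤ n then q i else r) z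
      = chainVal γ n q r.1.2 + cst γ r z := by
  have hq' : ∀ i ≤ n, (fun i => if i ≤ n then q i else r) i = q i := fun i hi => if_pos hi
  unfold chainVal
  rw [Finset.sum_range_succ]
  have hlast : (if n + 1 ≤ n then q (n+1) else r) = r := if_neg (by omega)
  simp only [hlast]
  have hsum : (∑ i ∈ Finset.range n,
      cst γ (if i ≤ n then q i else r) ((if i + 1 ≤ n then q (i+1) else r).1.2))
      = ∑ i ∈ Finset.range n, cst γ (q i) ((q (i+1)).1.2) := by
    refine Finset.sum_congr rfl fun i hi => ?_
    have hi' : i < n := Finset.mem_range.mp hi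
    rw [if_pos hi'.le, if_pos (by omega : i + 1 ≤ n)]
  have hn : (if n ≤ n then q n else r) = q n := if_pos le_rfl
  simp only [hn] at *
  rw [hsum]

lemma chainVal_cycle {γ : ℝ} {B : Set (Mt M)} (hB : GammaCM γ B) {n : ℕ} {q : ℕ → Mt M}
    (hq : ∀ i ≤ n, q i ∈ B) : 0 ≤ chainVal γ n q ((q 0).1.2) := by
  have h := hB n (fun i => q i.val) (fun i => hq i.val (Nat.lt_succ_iff.mp i.isLt))
  refine le_trans h (le_of_eq ?_)
  have key : ∀ i : Fin (n+1),
      min (dist (q i.val).1.1 ((q ((i+1 : Fin (n+1)) : ℕ)).1.2)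
            - γ * dist (q i.val).1.1 (q i.val).1.2)
          (dist (q i.val).1.2 ((q ((i+1 : Fin (n+1)) : ℕ)).1.2))
      = (fun j : ℕ => cst γ (q j) ((q (if j = n then 0 else j + 1)).1.2)) i.val := by
    intro i
    have hv : ((i+1 : Fin (n+1)) : ℕ) = if i.val = n then 0 else i.val + 1 := by
      rw [Fin.val_add_one]
      by_cases hc : i = Fin.last n
      · simp [hc, Fin.val_last]
      · have : i.val ≠ n := fun hh => hc (Fin.ext (by simp [hh, Fin.val_last]))
        simp [hc, this]
    rw [hv]; rfl
  calc (∑ i : Fin (n+1),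
      min (dist (q i.val).1.1 ((q ((i+1 : Fin (n+1)) : ℕ)).1.2)
            - γ * dist (q i.val).1.1 (q i.val).1.2)
          (dist (q i.val).1.2 ((q ((i+1 : Fin (n+1)) : ℕ)).1.2)))
      = ∑ i ∈ Finset.range (n+1), cst γ (q i) ((q (if i = n then 0 else i + 1)).1.2) := by
        rw [← Fin.sum_univ_eq_sum_range (fun j : ℕ => cst γ (q j) ((q (if j = n then 0 else j + 1)).1.2)) (n+1)]
        exact Finset.sum_congr rfl (fun i _ => key i)
    _ = chainVal γ n q ((q 0).1.2) := by
        rw [Finset.sum_range_succ, if_pos rfl]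
        unfold chainVal
        congr 1
        refine Finset.sum_congr rfl fun i hi => ?_
        have hi' : i < n := Finset.mem_range.mp hi
        rw [if_neg (by omega : ¬ i = n)]

lemma exists_steep {γ : ℝ} (hγ0 : 0 ≤ γ) {B : Set (Mt M)} (hne : B.Nonempty)
    (hB : GammaCM γ B) (base : M) :
    ∃ F : M → ℝ, F base = 0 ∧ LipschitzWith 1 F ∧
      ∀ p ∈ B, γ * dist p.1.1 p.1.2 ≤ F p.1.1 - F p.1.2 := by
  obtain ⟨p₀, hp₀⟩ := hne
  set S : M → Set ℝ := fun z =>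
    {val : ℝ | ∃ n : ℕ, ∃ q : ℕ → Mt M, q 0 = p₀ ∧ (∀ i ≤ n, q i ∈ B) ∧ chainVal γ n q z = val}
    with hS
  have hSne : ∀ z, (S z).Nonempty := fun z =>
    ⟨chainVal γ 0 (fun _ => p₀) z, 0, (fun _ => p₀), rfl, fun i _ => hp₀, rfl⟩
  have hbdd : ∀ z, ∀ v ∈ S z, -dist z p₀.1.2 ≤ v := by
    rintro z v ⟨n, q, hq0, hqB, rfl⟩
    have h1 : 0 ≤ chainVal γ n q ((q 0).1.2) := chainVal_cycle hB hqB
    have h2 := chainVal_le γ n q ((q 0).1.2) z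
    rw [hq0] at h1 h2
    have h3 : dist p₀.1.2 z = dist z p₀.1.2 := dist_comm _ _
    linarith
  set f : M → ℝ := fun z => sInf (S z) with hfdef
  have hBddBelow : ∀ z, BddBelow (S z) := fun z => ⟨-dist z p₀.1.2, fun v hv => hbdd z v hv⟩
  have hf_le : ∀ z, ∀ v ∈ S z, f z ≤ v := fun z v hv => csInf_le (hBddBelow z) hv
  have hf_lip : ∀ z w, f z ≤ f w + dist z w := by
    intro z w
    have hall : ∀ v ∈ S w, f z - dist z w ≤ v := by
      rintro v ⟨n, q, hq0, hqB, rfl⟩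
      have hmem : chainVal γ n q z ∈ S z := ⟨n, q, hq0, hqB, rfl⟩
      have h1 := hf_le z _ hmem
      have h2 := chainVal_le γ n q z w
      linarith
    have := le_csInf (hSne w) hall
    have heq : sInf (S w) = f w := rfl
    linarith [this.trans_eq heq]
  have hsuper : ∀ r ∈ B, ∀ z, f z ≤ f r.1.2 + cst γ r z := by
    intro r hr z
    have hall : ∀ v ∈ S r.1.2, f z - cst γ r z ≤ v := by
      rintro v ⟨n, q, hq0, hqB, rfl⟩
      have hsnoc := chainVal_snoc γ n q r z
      have hmem : chainVal γ (n+1) (fun i => if i ≤ n then q i else r) z ∈ S z := by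
        refine ⟨n+1, _, ?_, ?_, rfl⟩
        · simp only [Nat.zero_le, if_pos]; exact hq0
        · intro i hi
          by_cases h : i ≤ n
          · simpa [h] using hqB i h
          · simpa [h] using hr
      have h1 := hf_le z _ hmem
      rw [hsnoc] at h1
      linarith
    have hle := le_csInf (hSne r.1.2) hall
    have heq : sInf (S r.1.2) = f r.1.2 := rfl
    linarith [hle.trans_eq heq]
  have hsteep : ∀ r ∈ B, f r.1.1 ≤ f r.1.2 - γ * dist r.1.1 r.1.2 := by
    intro r hr
    have h1 := hsuper r hr r.1.1
    have hgd : 0 ≤ γ * dist r.1.1 r.1.2 := mul_nonneg hγ0 dist_nonneg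
    have hd : 0 ≤ dist r.1.2 r.1.1 := dist_nonneg
    have hc : cst γ r r.1.1 = -(γ * dist r.1.1 r.1.2) := by
      unfold cst
      rw [dist_self, min_eq_left (by linarith)]
      ring
    rw [hc] at h1
    linarith
  refine ⟨fun z => f base - f z, by simp, ?_, ?_⟩
  · refine LipschitzWith.of_dist_le_mul fun z w => ?_
    rw [Real.dist_eq, NNReal.coe_one, one_mul, abs_le]
    have h1 := hf_lip z w
    have h2 := hf_lip w z
    have hc : dist w z = dist z w := dist_comm w z
    constructor
    · simp only [neg_le_sub_iff_le_add]
      linarith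
    · simp only [sub_le_iff_le_add]
      linarith
  · intro p hp
    have := hsteep p hp
    simp only
    linarith

lemma glip_sub {g : M → ℝ} (hg : LipschitzWith 1 g) (a b : M) : g a - g b ≤ dist a b := by
  have h := hg.dist_le_mul a b
  rw [NNReal.coe_one, one_mul, Real.dist_eq] at h
  exact (le_abs_self _).trans h

lemma key {γ η : ℝ} (hγ0 : 0 ≤ γ) (hγ1 : γ ≤ 1) (hγη : γ ≤ η) {A : Set (Mt M)}
    {g : M → ℝ} (hg : LipschitzWith 1 g) {u v : M} (huv : u ≠ v)
    (hsteep : ∀ p ∈ A, η * dist p.1.1 p.1.2 ≤ g p.1.1 - g p.1.2)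
    (hcomp : ∀ x ∈ piA A, ∀ y ∈ piA A, g y - g x + η * dist u v ≤ dist x u + dist y v) :
    GammaCM γ (insert (pr u v huv) A) := by
  classical
  intro n p hp
  set C : ℝ := sSup {t : ℝ | ∃ y ∈ piA A, g y - dist y v = t} with hC
  have hCbdd : BddAbove {t : ℝ | ∃ y ∈ piA A, g y - dist y v = t} := by
    refine ⟨g v, ?_⟩
    rintro t ⟨y, hy, rfl⟩
    have := glip_sub hg y v
    linarith
  have hP1 : ∀ y ∈ piA A, g y - dist y v ≤ C := fun y hy => le_csSup hCbdd ⟨y, hy, rfl⟩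
  have hP2 : ∀ yj ∈ piA A, C ≤ g yj + dist v yj := by
    intro yj hj
    refine csSup_le ⟨g yj - dist yj v, yj, hj, rfl⟩ ?_
    rintro t ⟨y, hy, rfl⟩
    have h1 := glip_sub hg y yj
    have h2 := dist_triangle y v yj
    have h3 : dist yj v = dist v yj := dist_comm _ _
    linarith
  have hP3 : ∀ yj ∈ piA A, C ≤ g yj + dist u yj - γ * dist u v := by
    intro yj hj
    refine csSup_le ⟨g yj - dist yj v, yj, hj, rfl⟩ ?_
    rintro t ⟨y, hy, rfl⟩
    have h1 := hcomp yj hj y hy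
    have h2 : γ * dist u v ≤ η * dist u v := mul_le_mul_of_nonneg_right hγη dist_nonneg
    have h3 : dist yj u = dist u yj := dist_comm _ _
    linarith
  set φ : Fin (n+1) → ℝ := fun i => if p i ∈ A then g (p i).1.2 else C with hφ
  have hnotA : ∀ j : Fin (n+1), p j ∉ A → (p j).1.1 = u ∧ (p j).1.2 = v := by
    intro j hj
    rcases Set.mem_insert_iff.mp (hp j) with h | h
    · rw [h]; exact ⟨rfl, rfl⟩
    · exact absurd h hj
  have hxpi : ∀ j, p j ∈ A → (p j).1.1 ∈ piA A := fun j hj => ⟨p j, hj, Or.inl rfl⟩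
  have hypi : ∀ j, p j ∈ A → (p j).1.2 ∈ piA A := fun j hj => ⟨p j, hj, Or.inr rfl⟩
  have hterm : ∀ i : Fin (n+1),
      φ i - φ (i+1) ≤ min (dist (p i).1.1 (p (i + 1)).1.2 - γ * dist (p i).1.1 (p i).1.2)
          (dist (p i).1.2 (p (i + 1)).1.2) := by
    intro i
    by_cases hi : p i ∈ A <;> by_cases hj : p (i+1) ∈ A
    · -- A A
      simp only [hφ, if_pos hi, if_pos hj]
      have hst := hsteep _ hi
      have h2 : γ * dist (p i).1.1 (p i).1.2 ≤ η * dist (p i).1.1 (p i).1.2 :=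
        mul_le_mul_of_nonneg_right hγη dist_nonneg
      refine le_min ?_ ?_
      · have := glip_sub hg (p i).1.1 (p (i+1)).1.2; linarith
      · have := glip_sub hg (p i).1.2 (p (i+1)).1.2; linarith
    · -- A I
      obtain ⟨hxu, hyv⟩ := hnotA _ hj
      simp only [hφ, if_pos hi, if_neg hj]
      rw [hyv]
      have hst := hsteep _ hi
      have h2 : γ * dist (p i).1.1 (p i).1.2 ≤ η * dist (p i).1.1 (p i).1.2 :=
        mul_le_mul_of_nonneg_right hγη dist_nonneg
      refine le_min ?_ ?_
      · have := hP1 _ (hxpi i hi); linarith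
      · have := hP1 _ (hypi i hi); linarith
    · -- I A
      obtain ⟨hxu, hyv⟩ := hnotA _ hi
      simp only [hφ, if_neg hi, if_pos hj]
      rw [hxu, hyv]
      refine le_min ?_ ?_
      · have := hP3 _ (hypi _ hj); linarith
      · have := hP2 _ (hypi _ hj); linarith
    · -- I I
      obtain ⟨hxu1, hyv1⟩ := hnotA _ hi
      obtain ⟨hxu2, hyv2⟩ := hnotA _ hj
      simp only [hφ, if_neg hi, if_neg hj]
      rw [hxu1, hyv1, hyv2, dist_self, sub_self]
      refine le_min ?_ ?_
      · have hd : 0 ≤ dist u v := dist_nonneg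
        nlinarith
      · exact le_rfl
  have hsum : (∑ i : Fin (n+1), (φ i - φ (i+1))) = 0 := by
    rw [Finset.sum_sub_distrib]
    rw [Fintype.sum_equiv (Equiv.addRight (1 : Fin (n+1))) (fun i => φ (i+1)) φ (fun i => rfl)]
    ring
  calc (0:ℝ) = ∑ i : Fin (n+1), (φ i - φ (i+1)) := hsum.symm
    _ ≤ _ := Finset.sum_le_sum fun i _ => hterm i

/-- `M` has the 2-Lip-LTP. -/
def TwoLipLTP (M : Type*) [MetricSpace M] (base : M) : Prop :=
  ∀ A : Set (Mt M), A.Finite → GammaCM 1 A → ∀ ε : ℝ, 0 < ε →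
    ∃ f g : M → ℝ, f base = 0 ∧ LipschitzWith 1 f ∧ g base = 0 ∧ LipschitzWith 1 g ∧
      ∃ u v : M, u ≠ v ∧
        (∀ p ∈ A, 1 - ε ≤ mQ f p ∧ 1 - ε ≤ mQ g p) ∧
        ∀ x ∈ piA A, ∀ y ∈ piA A,
          max (f x - f y) (g y - g x) + (1 - ε) * dist u v ≤ dist x u + dist y v

theorem stmt14 (base : M) :
    TwoLipLTP M base ↔
      ∀ A : Set (Mt M), A.Finite → GammaCM 1 A → ∀ γ : ℝ, 0 < γ → γ < 1 →
        ∃ (u v : M) (huv : u ≠ v),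
          GammaCM γ (insert (pr u v huv) A) ∧
          GammaCM γ (insert (pr v u huv.symm) A) := by
  constructor
  · intro hL A hAfin hACM γ hγ0 hγ1
    have hε : (0:ℝ) < 1 - γ := by linarith
    obtain ⟨f, g, hf0, hfL, hg0, hgL, u, v, huv, hA, hmax⟩ := hL A hAfin hACM (1-γ) hε
    have hee : (1:ℝ) - (1-γ) = γ := by ring
    refine ⟨u, v, huv, ?_, ?_⟩
    · have hsteepg : ∀ p ∈ A, γ * dist p.1.1 p.1.2 ≤ g p.1.1 - g p.1.2 := by
        intro p hp
        have h := (hA p hp).2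
        rw [hee] at h
        have hd : 0 < dist p.1.1 p.1.2 := dist_pos.mpr p.2
        unfold mQ at h
        rw [le_div_iff₀ hd] at h
        exact h
      have hcompg : ∀ x ∈ piA A, ∀ y ∈ piA A,
          g y - g x + γ * dist u v ≤ dist x u + dist y v := by
        intro x hx y hy
        have h := hmax x hx y hy
        rw [hee] at h
        have h2 : g y - g x ≤ max (f x - f y) (g y - g x) := le_max_right _ _
        linarith
      exact key hγ0.le hγ1.le le_rfl hgL huv hsteepg hcompg
    · have hsteepf : ∀ p ∈ A, γ * dist p.1.1 p.1.2 ≤ f p.1.1 - f p.1.2 := by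
        intro p hp
        have h := (hA p hp).1
        rw [hee] at h
        have hd : 0 < dist p.1.1 p.1.2 := dist_pos.mpr p.2
        unfold mQ at h
        rw [le_div_iff₀ hd] at h
        exact h
      have hcompf : ∀ x ∈ piA A, ∀ y ∈ piA A,
          f y - f x + γ * dist v u ≤ dist x v + dist y u := by
        intro x hx y hy
        have h := hmax y hy x hx
        rw [hee] at h
        have h2 : f y - f x ≤ max (f y - f x) (g x - g y) := le_max_left _ _
        have hc1 : γ * dist v u = γ * dist u v := by rw [dist_comm]
        linarith
      exact key hγ0.le hγ1.le le_rfl hfL huv.symm hsteepf hcompf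
  · intro hext A hAfin hACM ε hε
    set γ : ℝ := max (1 - ε) (1/2) with hγdef
    have hγ0 : (0:ℝ) < γ := lt_of_lt_of_le one_half_pos (le_max_right _ _)
    have hγ1 : γ < 1 := max_lt (by linarith) (by norm_num)
    have h1e : 1 - ε ≤ γ := le_max_left _ _
    obtain ⟨u, v, huv, h1, h2⟩ := hext A hAfin hACM γ hγ0 hγ1
    obtain ⟨f, hf0, hfL, hfst⟩ :=
      exists_steep hγ0.le ⟨pr v u huv.symm, Set.mem_insert _ _⟩ h2 base
    obtain ⟨g, hg0, hgL, hgst⟩ :=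
      exists_steep hγ0.le ⟨pr u v huv, Set.mem_insert _ _⟩ h1 base
    refine ⟨f, g, hf0, hfL, hg0, hgL, u, v, huv, ?_, ?_⟩
    · intro p hp
      have hd : 0 < dist p.1.1 p.1.2 := dist_pos.mpr p.2
      have hmul : (1 - ε) * dist p.1.1 p.1.2 ≤ γ * dist p.1.1 p.1.2 :=
        mul_le_mul_of_nonneg_right h1e dist_nonneg
      constructor
      · have hst := hfst p (Set.mem_insert_of_mem _ hp)
        unfold mQ
        rw [le_div_iff₀ hd]
        linarith
      · have hst := hgst p (Set.mem_insert_of_mem _ hp)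
        unfold mQ
        rw [le_div_iff₀ hd]
        linarith
    · intro x _ y _
      have hfxu := glip_sub hfL x u
      have hfvy := glip_sub hfL v y
      have hfvu : γ * dist v u ≤ f v - f u := hfst (pr v u huv.symm) (Set.mem_insert _ _)
      have hgux := glip_sub hgL u x
      have hgyv := glip_sub hgL y v
      have hguv : γ * dist u v ≤ g u - g v := hgst (pr u v huv) (Set.mem_insert _ _)
      have hmul : (1 - ε) * dist u v ≤ γ * dist u v :=
        mul_le_mul_of_nonneg_right h1e dist_nonneg
      have hc1 : γ * dist v u = γ * dist u v := by rw [dist_comm]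
      have hc2 : dist v y = dist y v := dist_comm _ _
      have hc3 : dist u x = dist x u := dist_comm _ _
      have hmx : max (f x - f y) (g y - g x) ≤ dist x u + dist y v - (1 - ε) * dist u v :=
        max_le (by linarith) (by linarith)
      linarith
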